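/- With the matrices Aᵢ (i = 1,…,7) defined as in the reduction from the ZULC problem, if a word i₁,…,i_L ∈ {1,…,5}^L contains no occurrence of 6 or 7, then tr(A_{i₁}⋯A_{i_L}) = (1/2)[(tr(Y_{i₁}⋯Y_{i_L}))² + tr((Y_{i₁}⋯Y_{i_L})²)] + 1. -/

import Mathlib

/-!
Since `O†O = P`, we have `O P = O` and `P O† = O†`, so the upper block of `Aᵢ` is `O (Yᵢ ⊗ Yᵢ) O†`.
The map `X ↦ O X O†` is multiplicative on matrices commuting with `O†O = P` (and sends `1` to
`O O† = 1`), and `P` commutes with every `G ⊗ G`; hence the upper block of the product is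
`O (G ⊗ G) O†` with `G = Y_{i₁} ⋯ Y_{i_L}`, whose trace is
`tr (P (G ⊗ G)) = ½ (tr (G ⊗ G) + tr (F (G ⊗ G))) = ½ ((tr G)² + tr (G²))`.
-/

open Matrix Kronecker

namespace Matrix

abbrev swapMatrix (n R : Type*) [DecidableEq n] [Zero R] [One R] : Matrix (n × n) (n × n) R :=
  Equiv.Perm.permMatrix R (Equiv.prodComm n n)

theorem swapMatrix_eq_of {n R : Type*} [DecidableEq n] [Zero R] [One R] :
    swapMatrix n R = of fun p q => if p.1 = q.2 ∧ p.2 = q.1 then 1 else 0 := by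
  ext p q
  simp only [PEquiv.toMatrix_apply, Equiv.toPEquiv_apply, Option.mem_def, Option.some.injEq,
    Equiv.prodComm_apply, of_apply, Prod.ext_iff, Prod.fst_swap, Prod.snd_swap]
  simp only [eq_comm, and_comm]

section Swap

variable {n R : Type*} [Fintype n] [DecidableEq n] [CommSemiring R]

theorem swapMatrix_mul (M : Matrix (n × n) (n × n) R) :
    swapMatrix n R * M = M.submatrix Prod.swap id :=
  PEquiv.toMatrix_toPEquiv_mul _ M

theorem mul_swapMatrix (M : Matrix (n × n) (n × n) R) :
    M * swapMatrix n R = M.submatrix id Prod.swap :=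
  PEquiv.mul_toMatrix_toPEquiv M _

theorem commute_swapMatrix_kronecker_self (G : Matrix n n R) :
    Commute (swapMatrix n R) (G ⊗ₖ G) := by
  rw [Commute, SemiconjBy, swapMatrix_mul, mul_swapMatrix]
  ext p q
  simp only [submatrix_apply, kroneckerMap_apply, Prod.fst_swap, Prod.snd_swap, id, mul_comm]

theorem trace_swapMatrix_mul_kronecker_self (G : Matrix n n R) :
    trace (swapMatrix n R * (G ⊗ₖ G)) = trace (G * G) := by
  rw [swapMatrix_mul]
  simp only [trace, diag, submatrix_apply, kroneckerMap_apply, mul_apply, Fintype.sum_prod_type,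
    Prod.fst_swap, Prod.snd_swap, id]
  exact Finset.sum_comm

theorem commute_symmetrizer_kronecker_self (c : R) (G : Matrix n n R) :
    Commute (c • (1 + swapMatrix n R)) (G ⊗ₖ G) :=
  ((Commute.one_left _).add_left (commute_swapMatrix_kronecker_self G)).smul_left c

theorem trace_symmetrizer_mul_kronecker_self (c : R) (G : Matrix n n R) :
    trace (c • (1 + swapMatrix n R) * (G ⊗ₖ G)) =
      c * (trace G ^ 2 + trace (G * G)) := by
  rw [smul_mul, trace_smul, add_mul, one_mul, trace_add, trace_kronecker,
    trace_swapMatrix_mul_kronecker_self, smul_eq_mul, sq]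

end Swap

theorem list_prod_map_kronecker_self {n R : Type*} [Fintype n] [DecidableEq n] [CommSemiring R]
    (l : List (Matrix n n R)) : (l.map fun X => X ⊗ₖ X).prod = l.prod ⊗ₖ l.prod := by
  induction l with
  | nil => simp
  | cons X l ih => simp [ih, mul_kronecker_mul]

theorem list_prod_map_mul_mul {m n R : Type*} [Fintype m] [Fintype n] [DecidableEq m]
    [DecidableEq n] [Semiring R] {O : Matrix m n R} {Q : Matrix n m R} (hOQ : O * Q = 1)
    (l : List (Matrix n n R)) (hl : ∀ X ∈ l, Commute (Q * O) X) :
    (l.map fun X => O * X * Q).prod = O * l.prod * Q := by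
  induction l with
  | nil => simpa using hOQ.symm
  | cons X l ih =>
    rw [List.map_cons, List.prod_cons, ih fun Y hY => hl Y (List.mem_cons_of_mem X hY),
      List.prod_cons]
    calc O * X * Q * (O * l.prod * Q) = O * (X * (Q * O)) * l.prod * Q := by
          simp only [Matrix.mul_assoc]
      _ = O * ((Q * O) * X) * l.prod * Q := by rw [(hl X List.mem_cons_self).eq]
      _ = O * X * l.prod * Q := by simp only [← Matrix.mul_assoc, hOQ, Matrix.one_mul]
      _ = O * (X * l.prod) * Q := by rw [Matrix.mul_assoc O]

theorem list_prod_map_fromBlocks_one {m o R : Type*} [Fintype m] [Fintype o] [DecidableEq m]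
    [DecidableEq o] [Semiring R] (l : List (Matrix m m R)) :
    (l.map fun X => fromBlocks X 0 0 (1 : Matrix o o R)).prod = fromBlocks l.prod 0 0 1 := by
  induction l with
  | nil => simp [fromBlocks_one]
  | cons X l ih => simp [ih, fromBlocks_multiply]

theorem trace_fromBlocks {m o R : Type*} [Fintype m] [Fintype o] [AddCommMonoid R]
    (A : Matrix m m R) (B : Matrix m o R) (C : Matrix o m R) (D : Matrix o o R) :
    trace (fromBlocks A B C D) = trace A + trace D := by
  simp [trace, Fintype.sum_sum_type]

end Matrix

theorem zulc_reduction_trace_no_6_or_7_general (d m : ℕ)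
    (Y : Fin 5 → Matrix (Fin d) (Fin d) ℤ)
    (O : Matrix (Fin m) (Fin d × Fin d) ℂ) :
    let F : Matrix (Fin d × Fin d) (Fin d × Fin d) ℂ :=
      fun p q => if p.1 = q.2 ∧ p.2 = q.1 then 1 else 0
    let P : Matrix (Fin d × Fin d) (Fin d × Fin d) ℂ := (1 / 2 : ℂ) • (1 + F)
    let Yc : Fin 5 → Matrix (Fin d) (Fin d) ℂ := fun i => (Y i).map Int.cast
    let A : Fin 5 → Matrix (Fin m ⊕ Unit) (Fin m ⊕ Unit) ℂ :=
      fun i => Matrix.fromBlocks (O * P * (Yc i ⊗ₖ Yc i) * P * Oᴴ) 0 0 1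
    O * Oᴴ = 1 → Oᴴ * O = P →
    ∀ (L : ℕ) (w : Fin L → Fin 5),
      ((List.ofFn fun l => A (w l)).prod).trace =
        (1 / 2 : ℂ) * ((((List.ofFn fun l => Yc (w l)).prod).trace) ^ 2 +
          (((List.ofFn fun l => Yc (w l)).prod) *
            ((List.ofFn fun l => Yc (w l)).prod)).trace) + 1 := by
  intro F P Yc A hO hP L w
  have hP' : P = (1 / 2 : ℂ) • (1 + swapMatrix (Fin d) ℂ) := by rw [swapMatrix_eq_of]; rfl
  have hOP : O * P = O := by rw [← hP, ← Matrix.mul_assoc, hO, Matrix.one_mul]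
  have hPO : P * Oᴴ = Oᴴ := by rw [← hP, Matrix.mul_assoc, hO, Matrix.mul_one]
  set Ys := List.ofFn fun l => Yc (w l)
  have hA : (List.ofFn fun l => A (w l)) =
      ((Ys.map fun X => X ⊗ₖ X).map fun X => O * X * Oᴴ).map
        fun X => fromBlocks X 0 0 (1 : Matrix Unit Unit ℂ) := by
    simp only [Ys, List.map_ofFn, Function.comp_def, A, hOP, Matrix.mul_assoc, hPO]
  have hcomm : ∀ X ∈ Ys.map fun X => X ⊗ₖ X, Commute (Oᴴ * O) X := by
    simp only [List.mem_map]
    rintro _ ⟨G, -, rfl⟩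
    rw [hP, hP']
    exact commute_symmetrizer_kronecker_self _ G
  rw [hA, list_prod_map_fromBlocks_one, list_prod_map_mul_mul hO _ hcomm,
    list_prod_map_kronecker_self, trace_fromBlocks, trace_mul_comm, ← Matrix.mul_assoc, hP, hP',
    trace_symmetrizer_mul_kronecker_self, trace_one, Fintype.card_unit, Nat.cast_one]

theorem zulc_reduction_trace_no_6_or_7 (d m : ℕ) [NeZero d]
    (Y : Fin 5 → Matrix (Fin d) (Fin d) ℤ)
    (O : Matrix (Fin m) (Fin d × Fin d) ℂ) :
    let F : Matrix (Fin d × Fin d) (Fin d × Fin d) ℂ :=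
      fun p q => if p.1 = q.2 ∧ p.2 = q.1 then 1 else 0
    let P : Matrix (Fin d × Fin d) (Fin d × Fin d) ℂ := (1 / 2 : ℂ) • (1 + F)
    let Yc : Fin 5 → Matrix (Fin d) (Fin d) ℂ := fun i => (Y i).map Int.cast
    let A : Fin 5 → Matrix (Fin m ⊕ Unit) (Fin m ⊕ Unit) ℂ :=
      fun i => Matrix.fromBlocks (O * P * (Yc i ⊗ₖ Yc i) * P * Oᴴ) 0 0 1
    O * Oᴴ = 1 → Oᴴ * O = P →
    ∀ (L : ℕ) (w : Fin L → Fin 5),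
      ((List.ofFn fun l => A (w l)).prod).trace =
        (1 / 2 : ℂ) * ((((List.ofFn fun l => Yc (w l)).prod).trace) ^ 2 +
          (((List.ofFn fun l => Yc (w l)).prod) *
            ((List.ofFn fun l => Yc (w l)).prod)).trace) + 1 :=
  zulc_reduction_trace_no_6_or_7_general d m Y O
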